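/- arXiv:2601.02207 — 8 statements merged into one kernel-verified Lean document; each statement's English description precedes it below -/
import Mathlib

section
/- Fix η ∈ ℝ, λ ≥ 0 and β ∈ [0,1], and suppose the feasible set X is nonempty. Then the linear program min_{x ∈ X} f(x,η), where f(x,η) = (1/n)·∑_{t,s,a} [ c(t,s,a)·x(t,s,a) + λ·x(t,s,a)·( β·(c(t,s,a) − η)⁺ + (1−β)·(η − c(t,s,a))⁺ ) ], attains its minimum at some x* ∈ X that is deterministic: for every pair (t,s) there is at most one action a ∈ A with x*(t,s,a) > 0. -/
/-!
For fixed `η` the objective is linear in `x` and the feasible set is compact, so its minimisers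
form a nonempty compact exposed face; by Krein–Milman this face has an extreme point, which is
then an extreme point of the feasible set.

Extreme points are deterministic. Suppose `x` randomises at `(t₀, s₀)`; let `U` be its support
and `C` the set of states of positive mass. A direction `d` supported on `U` keeps `x ± ε d`
feasible iff it satisfies the balance equations at the states of `C` (at the other states they
hold automatically: nothing flows from the support into a massless state) and has mass `0` at
time `0`. These are `|C| + 1` linear conditions, one of them redundant since the balance defects
of any `d` sum to zero, while `|C| < |U|` because every state of `C` carries an action of `U` and
`(t₀, s₀)` carries two. So a nonzero such `d` exists, contradicting extremality.
-/

/-- Feasible set `X` of state-action probabilities for the cyclic MDP. -/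
def Feasible {n : ℕ} [NeZero n] {S A : Type*} [Fintype S] [Fintype A]
    (p : ZMod n → S → A → S → ℝ) (x : ZMod n → S → A → ℝ) : Prop :=
  (∀ t s a, 0 ≤ x t s a) ∧
  (∀ t : ZMod n, ∑ s, ∑ a, x t s a = 1) ∧
  (∀ (t : ZMod n) (s : S), ∑ a, x (t + 1) s a = ∑ s', ∑ a, x t s' a * p t s' a s)

/-- The risk-averse objective `f(x, η)`. -/
noncomputable def objF {n : ℕ} [NeZero n] {S A : Type*} [Fintype S] [Fintype A]
    (c : ZMod n → S → A → ℝ) (lam β : ℝ) (x : ZMod n → S → A → ℝ) (η : ℝ) : ℝ :=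
  (1 / (n : ℝ)) * ∑ t, ∑ s, ∑ a,
    (c t s a * x t s a +
      lam * x t s a * (β * max (c t s a - η) 0 + (1 - β) * max (η - c t s a) 0))

open Finset Module

theorem LinearMap.ker_ne_bot_of_range_le_ker {K V W : Type*} [Field K] [AddCommGroup V]
    [Module K V] [FiniteDimensional K V] [AddCommGroup W] [Module K W] [FiniteDimensional K W]
    {Φ : V →ₗ[K] W} {ψ : Module.Dual K W} (hψ : ψ ≠ 0) (hΦψ : range Φ ≤ ker ψ)
    (h : finrank K W ≤ finrank K V) : ker Φ ≠ ⊥ := by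
  have hker := Module.Dual.finrank_ker_add_one_of_ne_zero hψ
  rw [← ker_codRestrict (ker ψ) Φ fun v => hΦψ (mem_range_self Φ v)]
  exact ker_ne_bot_of_finrank_lt (by omega)

theorem Set.eq_zero_of_add_mem_of_sub_mem_of_mem_extremePoints {E : Type*} [AddCommGroup E]
    [Module ℝ E] {K : Set E} {x d : E} (hx : x ∈ K.extremePoints ℝ) (hadd : x + d ∈ K)
    (hsub : x - d ∈ K) : d = 0 := by
  have hmid : x ∈ openSegment ℝ (x + d) (x - d) :=
    ⟨1 / 2, 1 / 2, by norm_num, by norm_num, by norm_num, by module⟩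
  simpa using (mem_extremePoints_iff_left.1 hx).2 _ hadd _ hsub hmid

theorem eventually_nhds_zero_abs_mul_le {x d : ℝ} (hx : 0 ≤ x) (hd : x = 0 → d = 0) :
    ∀ᶠ ε in nhds (0 : ℝ), |ε * d| ≤ x := by
  rcases hx.eq_or_lt with rfl | hx
  · simp [hd rfl]
  · have : Filter.Tendsto (fun ε : ℝ => |ε * d|) (nhds 0) (nhds 0) := by
      simpa using (continuous_id.mul continuous_const).abs.tendsto (0 : ℝ)
    exact (this.eventually (gt_mem_nhds hx)).mono fun _ => le_of_lt

section Support

variable {T S A : Type*}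

def IsDeterministic (x : T → S → A → ℝ) : Prop :=
  ∀ t s a a', 0 < x t s a → 0 < x t s a' → a = a'

theorem card_subtype_sum_ne_zero_lt [Fintype S] [Fintype A] {x : T → S → A → ℝ} {t₀ : T}
    {s₀ : S} {a₁ a₂ : A} (ha : a₁ ≠ a₂) (h₁ : x t₀ s₀ a₁ ≠ 0) (h₂ : x t₀ s₀ a₂ ≠ 0)
    [Fintype {v : T × S // ∑ a, x v.1 v.2 a ≠ 0}]
    [Fintype {u : T × S × A // x u.1 u.2.1 u.2.2 ≠ 0}] :
    Fintype.card {v : T × S // ∑ a, x v.1 v.2 a ≠ 0} <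
      Fintype.card {u : T × S × A // x u.1 u.2.1 u.2.2 ≠ 0} := by
  have hpick (v : {v : T × S // ∑ a, x v.1 v.2 a ≠ 0}) :
      ∃ a, x v.1.1 v.1.2 a ≠ 0 ∧ (v.1 = (t₀, s₀) → a = a₁) := by
    by_cases hv : v.1 = (t₀, s₀)
    · exact ⟨a₁, by rwa [hv], fun _ => rfl⟩
    · obtain ⟨a, -, ha⟩ := exists_ne_zero_of_sum_ne_zero v.2
      exact ⟨a, ha, fun h => absurd h hv⟩
  choose pick hpick using hpick
  refine Fintype.card_lt_of_injective_of_notMem (fun v => ⟨(v.1.1, v.1.2, pick v), (hpick v).1⟩)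
    (fun v w h => ?_) (b := ⟨(t₀, s₀, a₂), h₂⟩) ?_
  · simp only [Subtype.mk.injEq, Prod.mk.injEq] at h
    exact Subtype.ext (Prod.ext h.1 h.2.1)
  · rintro ⟨v, hv⟩
    simp only [Subtype.mk.injEq, Prod.mk.injEq] at hv
    exact ha ((hpick v).2 (Prod.ext hv.1 hv.2.1) ▸ hv.2.2)

noncomputable def extendByZero (x : T → S → A → ℝ) :
    ({u : T × S × A // x u.1 u.2.1 u.2.2 ≠ 0} → ℝ) →ₗ[ℝ] (T → S → A → ℝ) where
  toFun f t s a := if h : x t s a ≠ 0 then f ⟨(t, s, a), h⟩ else 0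
  map_add' f g := by
    ext t s a
    by_cases h : x t s a = 0 <;> simp [h]
  map_smul' r f := by
    ext t s a
    by_cases h : x t s a = 0 <;> simp [h]

theorem extendByZero_apply_of_eq_zero {x : T → S → A → ℝ} (f) {t : T} {s : S} {a : A}
    (h : x t s a = 0) : extendByZero x f t s a = 0 := by
  simp [extendByZero, h]

theorem extendByZero_injective (x : T → S → A → ℝ) : Function.Injective (extendByZero x) := by
  intro f g h
  ext u
  simpa [extendByZero, u.2] using congr_fun (congr_fun (congr_fun h u.1.1) u.1.2.1) u.1.2.2

end Support

section Flow

variable {n : ℕ} {S A : Type*} [Fintype S] [Fintype A] {p : ZMod n → S → A → S → ℝ}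

def massAt (t : ZMod n) : (ZMod n → S → A → ℝ) →ₗ[ℝ] ℝ where
  toFun y := ∑ s, ∑ a, y t s a
  map_add' y z := by simp only [Pi.add_apply, sum_add_distrib]
  map_smul' r y := by simp only [Pi.smul_apply, smul_eq_mul, mul_sum, RingHom.id_apply]

def balanceDefect (p : ZMod n → S → A → S → ℝ) :
    (ZMod n → S → A → ℝ) →ₗ[ℝ] (ZMod n × S → ℝ) where
  toFun y v := ∑ a, y (v.1 + 1) v.2 a - ∑ s', ∑ a, y v.1 s' a * p v.1 s' a v.2
  map_add' y z := by
    ext v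
    simp only [Pi.add_apply, add_mul, sum_add_distrib]
    ring
  map_smul' r y := by
    ext v
    simp only [Pi.smul_apply, smul_eq_mul, mul_sum, mul_assoc, RingHom.id_apply, mul_sub]

theorem sum_balanceDefect (hp1 : ∀ t s a, ∑ s', p t s a s' = 1) (y : ZMod n → S → A → ℝ)
    (t : ZMod n) : ∑ s, balanceDefect p y (t, s) = massAt (t + 1) y - massAt t y := by
  simp only [balanceDefect, massAt, LinearMap.coe_mk, AddHom.coe_mk, sum_sub_distrib]
  congr 1
  rw [sum_comm]
  refine sum_congr rfl fun s' _ => ?_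
  rw [sum_comm]
  simp only [← mul_sum, hp1, mul_one]

variable [NeZero n]

theorem feasible_iff {x : ZMod n → S → A → ℝ} :
    Feasible p x ↔
      (∀ t s a, 0 ≤ x t s a) ∧ (∀ t, massAt t x = 1) ∧ balanceDefect p x = 0 := by
  simp only [Feasible, massAt, balanceDefect, LinearMap.coe_mk, AddHom.coe_mk, funext_iff,
    Prod.forall, Pi.zero_apply, sub_eq_zero]

theorem sum_balanceDefect_eq_zero (hp1 : ∀ t s a, ∑ s', p t s a s' = 1)
    (y : ZMod n → S → A → ℝ) : ∑ v, balanceDefect p y v = 0 := by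
  rw [Fintype.sum_prod_type]
  simp only [sum_balanceDefect hp1, sum_sub_distrib]
  exact sub_eq_zero.2 (Fintype.sum_equiv (Equiv.addRight 1) _ _ fun _ => rfl)

theorem massAt_eq_massAt_zero (hp1 : ∀ t s a, ∑ s', p t s a s' = 1)
    {y : ZMod n → S → A → ℝ} (hy : balanceDefect p y = 0) (t : ZMod n) :
    massAt t y = massAt 0 y := by
  have hstep (u : ZMod n) : massAt (u + 1) y = massAt u y := by
    rw [← sub_eq_zero, ← sum_balanceDefect hp1, hy]
    simp
  have hnat (k : ℕ) : massAt (k : ZMod n) y = massAt 0 y := by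
    induction k with
    | zero => simp
    | succ k ih => rw [Nat.cast_succ, hstep, ih]
  rw [← ZMod.natCast_zmod_val t, hnat]

theorem Feasible.add_smul (hp1 : ∀ t s a, ∑ s', p t s a s' = 1) {x d : ZMod n → S → A → ℝ}
    (hx : Feasible p x) (hd : balanceDefect p d = 0) (hd0 : massAt 0 d = 0) {ε : ℝ}
    (hpos : ∀ t s a, 0 ≤ x t s a + ε * d t s a) : Feasible p (x + ε • d) := by
  obtain ⟨-, hmass, hbal⟩ := feasible_iff.1 hx
  refine feasible_iff.2 ⟨hpos, fun t => ?_, ?_⟩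
  · rw [map_add, map_smul, hmass, massAt_eq_massAt_zero hp1 hd, hd0, smul_zero, add_zero]
  · rw [map_add, map_smul, hbal, hd, smul_zero, add_zero]

theorem Feasible.le_one {x : ZMod n → S → A → ℝ} (hx : Feasible p x) (t : ZMod n) (s : S)
    (a : A) : x t s a ≤ 1 :=
  calc x t s a ≤ ∑ a', x t s a' := single_le_sum (fun a' _ => hx.1 t s a') (mem_univ a)
    _ ≤ ∑ s', ∑ a', x t s' a' :=
      single_le_sum (f := fun s' => ∑ a', x t s' a')
        (fun s' _ => sum_nonneg fun a' _ => hx.1 t s' a') (mem_univ s)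
    _ = 1 := hx.2.1 t

theorem isCompact_setOf_feasible (p : ZMod n → S → A → S → ℝ) :
    IsCompact {x | Feasible p x} := by
  have hclosed : IsClosed {x | Feasible p x} := by
    simp only [Feasible, Set.ofPred_and, Set.ofPred_forall]
    refine .inter (isClosed_iInter fun t => isClosed_iInter fun s => isClosed_iInter fun a =>
      isClosed_le continuous_const (by fun_prop)) (.inter
        (isClosed_iInter fun t => isClosed_eq (by fun_prop) continuous_const)
        (isClosed_iInter fun t => isClosed_iInter fun s => isClosed_eq (by fun_prop) (by fun_prop)))
  refine (isCompact_univ_pi fun _ => isCompact_univ_pi fun _ => isCompact_univ_pi fun _ =>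
    isCompact_Icc).of_isClosed_subset hclosed fun x hx t _ s _ a _ => ⟨hx.1 t s a, hx.le_one t s a⟩

theorem balanceDefect_eq_zero_of_sum_eq_zero (hp0 : ∀ t s a s', 0 ≤ p t s a s')
    {x y : ZMod n → S → A → ℝ} (hx : Feasible p x) (hy : ∀ t s a, x t s a = 0 → y t s a = 0)
    {v : ZMod n × S} (hv : ∑ a, x (v.1 + 1) v.2 a = 0) : balanceDefect p y v = 0 := by
  obtain ⟨hx0, -, hbal⟩ := hx
  have hterm_nonneg (s' : S) (a : A) : 0 ≤ x v.1 s' a * p v.1 s' a v.2 :=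
    mul_nonneg (hx0 _ _ _) (hp0 _ _ _ _)
  have hterm (s' : S) (a : A) : x v.1 s' a * p v.1 s' a v.2 = 0 := by
    have hout := (sum_eq_zero_iff_of_nonneg fun s' _ => sum_nonneg fun a _ =>
      hterm_nonneg s' a).1 ((hbal v.1 v.2).symm.trans hv) s' (mem_univ s')
    exact (sum_eq_zero_iff_of_nonneg fun a _ => hterm_nonneg s' a).1 hout a (mem_univ a)
  have hin (a : A) : y (v.1 + 1) v.2 a = 0 :=
    hy _ _ _ ((sum_eq_zero_iff_of_nonneg fun a _ => hx0 _ _ _).1 hv a (mem_univ a))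
  have hout (s' : S) (a : A) : y v.1 s' a * p v.1 s' a v.2 = 0 := by
    rcases mul_eq_zero.1 (hterm s' a) with h | h
    · rw [hy _ _ _ h, zero_mul]
    · rw [h, mul_zero]
  simp [balanceDefect, hin, hout]

theorem sum_balanceDefect_subtype_eq_zero (hp0 : ∀ t s a s', 0 ≤ p t s a s')
    (hp1 : ∀ t s a, ∑ s', p t s a s' = 1) {x y : ZMod n → S → A → ℝ} (hx : Feasible p x)
    (hy : ∀ t s a, x t s a = 0 → y t s a = 0) :
    ∑ v : {v : ZMod n × S // ∑ a, x (v.1 + 1) v.2 a ≠ 0}, balanceDefect p y v = 0 := by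
  have h := Fintype.sum_subtype_add_sum_subtype
    (fun v : ZMod n × S => ∑ a, x (v.1 + 1) v.2 a ≠ 0) (balanceDefect p y)
  have hmassless : ∑ v : {v : ZMod n × S // ¬∑ a, x (v.1 + 1) v.2 a ≠ 0},
      balanceDefect p y v = 0 :=
    Fintype.sum_eq_zero _ fun v => balanceDefect_eq_zero_of_sum_eq_zero hp0 hx hy (not_not.1 v.2)
  rwa [sum_balanceDefect_eq_zero hp1, hmassless, add_zero] at h

theorem Feasible.exists_direction (hp0 : ∀ t s a s', 0 ≤ p t s a s')
    (hp1 : ∀ t s a, ∑ s', p t s a s' = 1) {x : ZMod n → S → A → ℝ} (hx : Feasible p x)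
    {t₀ : ZMod n} {s₀ : S} {a₁ a₂ : A} (ha : a₁ ≠ a₂) (h₁ : x t₀ s₀ a₁ ≠ 0)
    (h₂ : x t₀ s₀ a₂ ≠ 0) :
    ∃ d, d ≠ 0 ∧ (∀ t s a, x t s a = 0 → d t s a = 0) ∧ balanceDefect p d = 0 ∧
      massAt 0 d = 0 := by
  let C := {v : ZMod n × S // ∑ a, x (v.1 + 1) v.2 a ≠ 0}
  let Φ : ({u : ZMod n × S × A // x u.1 u.2.1 u.2.2 ≠ 0} → ℝ) →ₗ[ℝ] (C → ℝ) × ℝ :=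
    ((LinearMap.funLeft ℝ ℝ Subtype.val ∘ₗ balanceDefect p).prod (massAt 0)) ∘ₗ
      extendByZero x
  let ψ : Module.Dual ℝ ((C → ℝ) × ℝ) := (∑ v, LinearMap.proj v) ∘ₗ LinearMap.fst ℝ _ _
  have hψ : ψ ≠ 0 := by
    let v₀ : C := ⟨(t₀ - 1, s₀), by
      simpa using (sum_pos' (fun a _ => hx.1 t₀ s₀ a)
        ⟨a₁, mem_univ _, (hx.1 _ _ _).lt_of_ne' h₁⟩).ne'⟩
    intro h
    classical
    simpa [ψ] using LinearMap.congr_fun h (Pi.single v₀ 1, 0)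
  have hΦψ : LinearMap.range Φ ≤ LinearMap.ker ψ := by
    rintro _ ⟨f, rfl⟩
    simpa [Φ, ψ] using sum_balanceDefect_subtype_eq_zero hp0 hp1 hx
      fun t s a h => extendByZero_apply_of_eq_zero f h
  have hdim : finrank ℝ ((C → ℝ) × ℝ) ≤
      finrank ℝ ({u : ZMod n × S × A // x u.1 u.2.1 u.2.2 ≠ 0} → ℝ) := by
    have hC : Fintype.card C = Fintype.card {v : ZMod n × S // ∑ a, x v.1 v.2 a ≠ 0} :=
      Fintype.card_congr ((Equiv.addRight 1).prodCongr (Equiv.refl S) |>.subtypeEquiv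
        fun _ => Iff.rfl)
    simp only [finrank_prod, finrank_fintype_fun_eq_card, finrank_self, hC]
    exact card_subtype_sum_ne_zero_lt ha h₁ h₂
  obtain ⟨f, hf, hf0⟩ :=
    (Submodule.ne_bot_iff _).1 (LinearMap.ker_ne_bot_of_range_le_ker hψ hΦψ hdim)
  have hsupp (t s a) : x t s a = 0 → extendByZero x f t s a = 0 :=
    extendByZero_apply_of_eq_zero f
  refine ⟨extendByZero x f, fun h => hf0 (extendByZero_injective x (h.trans (map_zero _).symm)),
    hsupp, ?_, congr_arg Prod.snd hf⟩
  ext v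
  by_cases hv : ∑ a, x (v.1 + 1) v.2 a = 0
  · exact balanceDefect_eq_zero_of_sum_eq_zero hp0 hx hsupp hv
  · exact congr_fun (congr_arg Prod.fst hf) ⟨v, hv⟩

theorem isDeterministic_of_mem_extremePoints (hp0 : ∀ t s a s', 0 ≤ p t s a s')
    (hp1 : ∀ t s a, ∑ s', p t s a s' = 1) {x : ZMod n → S → A → ℝ}
    (hx : x ∈ {y | Feasible p y}.extremePoints ℝ) : IsDeterministic x := by
  intro t s a a' ha ha'
  by_contra hne
  obtain ⟨d, hd, hsupp, hbal, hmass⟩ := hx.1.exists_direction hp0 hp1 hne ha.ne' ha'.ne'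
  have hsmall : ∀ᶠ ε in nhds (0 : ℝ), ∀ t s a, |ε * d t s a| ≤ x t s a :=
    Filter.eventually_all.2 fun t => Filter.eventually_all.2 fun s => Filter.eventually_all.2
      fun a => eventually_nhds_zero_abs_mul_le (hx.1.1 t s a) (hsupp t s a)
  obtain ⟨ε, hε, hε0⟩ :=
    ((hsmall.filter_mono (nhdsWithin_le_nhds (s := Set.Ioi 0))).and self_mem_nhdsWithin).exists
  have hplus : Feasible p (x + ε • d) := hx.1.add_smul hp1 hbal hmass fun t s a => by
    linarith [(abs_le.1 (hε t s a)).1]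
  have hminus : Feasible p (x - ε • d) := by
    rw [sub_eq_add_neg, ← neg_smul]
    exact hx.1.add_smul hp1 hbal hmass fun t s a => by linarith [(abs_le.1 (hε t s a)).2]
  have := Set.eq_zero_of_add_mem_of_sub_mem_of_mem_extremePoints hx hplus hminus
  exact hd ((smul_eq_zero.1 this).resolve_left hε0.ne')

noncomputable def objFLinearMap (c : ZMod n → S → A → ℝ) (lam β η : ℝ) :
    (ZMod n → S → A → ℝ) →ₗ[ℝ] ℝ where
  toFun x := objF c lam β x η
  map_add' x y := by
    simp only [objF, Pi.add_apply, ← mul_add, ← sum_add_distrib]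
    congr 1
    refine sum_congr rfl fun t _ => sum_congr rfl fun s _ => sum_congr rfl fun a _ => by ring
  map_smul' r x := by
    simp only [objF, Pi.smul_apply, smul_eq_mul, RingHom.id_apply, mul_sum]
    refine sum_congr rfl fun t _ => sum_congr rfl fun s _ => sum_congr rfl fun a _ => by ring

end Flow

theorem stmt1_general (n : ℕ) [NeZero n] (S A : Type*) [Fintype S]
    [Fintype A]
    (p : ZMod n → S → A → S → ℝ)
    (hp0 : ∀ t s a s', 0 ≤ p t s a s')
    (hp1 : ∀ t s a, ∑ s', p t s a s' = 1)
    (c : ZMod n → S → A → ℝ)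
    (η lam β : ℝ)
    (hX : ∃ x, Feasible p x) :
    ∃ x : ZMod n → S → A → ℝ, Feasible p x ∧
      (∀ y : ZMod n → S → A → ℝ, Feasible p y →
        objF c lam β x η ≤ objF c lam β y η) ∧
      (∀ t s a a', 0 < x t s a → 0 < x t s a' → a = a') := by
  let K := {x | Feasible p x}
  let l : StrongDual ℝ (ZMod n → S → A → ℝ) :=
    -LinearMap.toContinuousLinearMap (objFLinearMap c lam β η)
  have hK : IsCompact K := isCompact_setOf_feasible p
  have hexposed : IsExposed ℝ K (l.toExposed K) := ContinuousLinearMap.toExposed.isExposed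
  have hmin : (l.toExposed K).Nonempty := by
    obtain ⟨x, hxK, hx⟩ := hK.exists_isMaxOn hX l.continuous.continuousOn
    exact ⟨x, hxK, fun y hy => hx hy⟩
  obtain ⟨x, hx⟩ := (hexposed.isCompact hK).extremePoints_nonempty hmin
  have hxK := hexposed.isExtreme.extremePoints_subset_extremePoints hx
  refine ⟨x, hxK.1, fun y hy => ?_, isDeterministic_of_mem_extremePoints hp0 hp1 hxK⟩
  simpa [l, objFLinearMap] using hx.1.2 y hy

/-- For fixed `η`, the LP `min_{x ∈ X} f(x, η)` attains its minimum at a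
deterministic policy. -/
theorem stmt1 (n : ℕ) [NeZero n] (S A : Type*) [Fintype S] [Nonempty S]
    [Fintype A] [Nonempty A]
    (p : ZMod n → S → A → S → ℝ)
    (hp0 : ∀ t s a s', 0 ≤ p t s a s')
    (hp1 : ∀ t s a, ∑ s', p t s a s' = 1)
    (c : ZMod n → S → A → ℝ)
    (η lam β : ℝ) (hlam : 0 ≤ lam) (hβ0 : 0 ≤ β) (hβ1 : β ≤ 1)
    (hX : ∃ x, Feasible p x) :
    ∃ x : ZMod n → S → A → ℝ, Feasible p x ∧
      (∀ y : ZMod n → S → A → ℝ, Feasible p y →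
        objF c lam β x η ≤ objF c lam β y η) ∧
      (∀ t s a a', 0 < x t s a → 0 < x t s a' → a = a') :=
  stmt1_general n S A p hp0 hp1 c η lam β hX
end

section
/- Let β ∈ (0,1) and set λ = 1/(1−β). Then for every x : T → S → A → ℝ with x ≥ 0 and ∑_{s,a} x(t,s,a) = 1 for every t ∈ T, and every η ∈ ℝ, the two objectives coincide: (1/n)·∑_{t,s,a} [ c(t,s,a)·x(t,s,a) + λ·x(t,s,a)·( β·(c(t,s,a) − η)⁺ + (1−β)·(η − c(t,s,a))⁺ ) ] = η + (λ/n)·∑_{t,s,a} x(t,s,a)·(c(t,s,a) − η)⁺. In particular the two minimization problems over any common feasible subset of such x (and η ∈ ℝ) have the same optimal value and the same optimal solutions. -/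
/-- With `λ = 1/(1-β)`, the mean-risk objective coincides with the
Rockafellar–Uryasev form `η + (λ/n)·∑ x·(c − η)⁺`. -/
theorem stmt2 (n : ℕ) [NeZero n] (S A : Type*) [Fintype S] [Nonempty S]
    [Fintype A] [Nonempty A]
    (c : ZMod n → S → A → ℝ) (β : ℝ) (hβ0 : 0 < β) (hβ1 : β < 1)
    (x : ZMod n → S → A → ℝ)
    (hx0 : ∀ t s a, 0 ≤ x t s a)
    (hx1 : ∀ t : ZMod n, ∑ s, ∑ a, x t s a = 1)
    (η : ℝ) :
    objF c (1 / (1 - β)) β x η =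
      η + ((1 / (1 - β)) / (n : ℝ)) *
        ∑ t, ∑ s, ∑ a, x t s a * max (c t s a - η) 0 := by
  have hne : (1 - β) ≠ 0 := by linarith
  have hn : (n : ℝ) ≠ 0 := Nat.cast_ne_zero.mpr (NeZero.ne n)
  have key : ∀ t s a,
      c t s a * x t s a +
        (1 / (1 - β)) * x t s a * (β * max (c t s a - η) 0 + (1 - β) * max (η - c t s a) 0)
      = η * x t s a + (1 / (1 - β)) * (x t s a * max (c t s a - η) 0) := by
    intro t s a
    rcases le_total (c t s a) η with h | h
    · rw [max_eq_right (by linarith), max_eq_left (by linarith)]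
      field_simp
      ring
    · rw [max_eq_left (by linarith), max_eq_right (by linarith)]
      field_simp
      ring
  unfold objF
  have hsum : ∀ t : ZMod n, ∑ s, ∑ a,
      (c t s a * x t s a +
        (1 / (1 - β)) * x t s a * (β * max (c t s a - η) 0 + (1 - β) * max (η - c t s a) 0))
      = η + (1 / (1 - β)) * ∑ s, ∑ a, x t s a * max (c t s a - η) 0 := by
    intro t
    calc ∑ s, ∑ a, (c t s a * x t s a +
        (1 / (1 - β)) * x t s a * (β * max (c t s a - η) 0 + (1 - β) * max (η - c t s a) 0))
        = ∑ s, ∑ a, (η * x t s a + (1 / (1 - β)) * (x t s a * max (c t s a - η) 0)) := by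
          refine Finset.sum_congr rfl fun s _ => Finset.sum_congr rfl fun a _ => key t s a
      _ = η * (∑ s, ∑ a, x t s a) + (1 / (1 - β)) * ∑ s, ∑ a, x t s a * max (c t s a - η) 0 := by
          simp [Finset.sum_add_distrib, Finset.mul_sum]
      _ = η + (1 / (1 - β)) * ∑ s, ∑ a, x t s a * max (c t s a - η) 0 := by
          rw [hx1 t, mul_one]
  rw [Finset.sum_congr rfl fun t _ => hsum t]
  rw [Finset.sum_add_distrib, Finset.sum_const, ← Finset.mul_sum]
  simp only [Finset.card_univ, ZMod.card, nsmul_eq_mul]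
  field_simp
end

section
/- Let λ > 0 and β ∈ (0,1), and suppose the feasible set X is nonempty. Then the bilinear program min_{x ∈ X, η ∈ ℝ} f(x,η) has an optimal solution (x*, η*) in which η* equals one of the cost atoms: there exist x* ∈ X and (t₀,s₀,a₀) ∈ T × S × A such that f(x*, c(t₀,s₀,a₀)) ≤ f(x, η) for all x ∈ X and all η ∈ ℝ. -/
/-! ### Auxiliary machinery -/

/-- The objective as a single sum over the product index type. -/
noncomputable def Gfun {ι : Type*} [Fintype ι] (d w : ι → ℝ) (lam β θ : ℝ) : ℝ :=
  ∑ i, (d i * w i + lam * w i * (β * max (d i - θ) 0 + (1 - β) * max (θ - d i) 0))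

/-- Affine interpolation identity on an interval free of atoms. -/
lemma G_interp {ι : Type*} [Fintype ι] (d w : ι → ℝ) (lam β η₁ η η₂ : ℝ)
    (h1 : η₁ ≤ η) (h2 : η ≤ η₂)
    (hsplit : ∀ i, d i ≤ η₁ ∨ η₂ ≤ d i) :
    (η₂ - η₁) * Gfun d w lam β η
      = (η₂ - η) * Gfun d w lam β η₁ + (η - η₁) * Gfun d w lam β η₂ := by
  unfold Gfun
  rw [Finset.mul_sum, Finset.mul_sum, Finset.mul_sum, ← Finset.sum_add_distrib]
  refine Finset.sum_congr rfl fun i _ => ?_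
  rcases hsplit i with h | h
  · rw [max_eq_right (by linarith : d i - η ≤ 0), max_eq_left (by linarith : 0 ≤ η - d i),
        max_eq_right (by linarith : d i - η₁ ≤ 0), max_eq_left (by linarith : 0 ≤ η₁ - d i),
        max_eq_right (by linarith : d i - η₂ ≤ 0), max_eq_left (by linarith : 0 ≤ η₂ - d i)]
    ring
  · rw [max_eq_left (by linarith : 0 ≤ d i - η), max_eq_right (by linarith : η - d i ≤ 0),
        max_eq_left (by linarith : 0 ≤ d i - η₁), max_eq_right (by linarith : η₁ - d i ≤ 0),
        max_eq_left (by linarith : 0 ≤ d i - η₂), max_eq_right (by linarith : η₂ - d i ≤ 0)]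
    ring

/-- For any `η`, some atom `d i₀` does at least as well. -/
lemma G_exists_atom {ι : Type*} [Fintype ι] [Nonempty ι] (d w : ι → ℝ)
    (hw : ∀ i, 0 ≤ w i) (lam β : ℝ) (hlam : 0 ≤ lam) (hβ0 : 0 ≤ β) (hβ1 : β ≤ 1)
    (η : ℝ) : ∃ i₀, Gfun d w lam β (d i₀) ≤ Gfun d w lam β η := by
  by_cases hex : ∃ i, d i = η
  · obtain ⟨i, hi⟩ := hex; exact ⟨i, by rw [hi]⟩
  push_neg at hex
  set L := Finset.univ.filter (fun i => d i < η) with hLdef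
  set H := Finset.univ.filter (fun i => η < d i) with hHdef
  have hLH : ∀ i, i ∈ L ∨ i ∈ H := by
    intro i
    rcases lt_trichotomy (d i) η with h | h | h
    · left; simp [hLdef, h]
    · exact absurd h (hex i)
    · right; simp [hHdef, h]
  by_cases hL : L.Nonempty
  · by_cases hH : H.Nonempty
    · obtain ⟨i₁, hi₁, hmax⟩ := L.exists_max_image d hL
      obtain ⟨i₂, hi₂, hmin⟩ := H.exists_min_image d hH
      have h1 : d i₁ < η := by simpa [hLdef] using hi₁
      have h2 : η < d i₂ := by simpa [hHdef] using hi₂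
      have hsplit : ∀ i, d i ≤ d i₁ ∨ d i₂ ≤ d i := by
        intro i
        rcases hLH i with h | h
        · exact Or.inl (hmax i h)
        · exact Or.inr (hmin i h)
      have hint := G_interp d w lam β (d i₁) η (d i₂) h1.le h2.le hsplit
      rcases le_total (Gfun d w lam β (d i₁)) (Gfun d w lam β (d i₂)) with hle | hle
      · refine ⟨i₁, ?_⟩
        have key : (d i₂ - d i₁) * Gfun d w lam β (d i₁)
            ≤ (d i₂ - d i₁) * Gfun d w lam β η := by nlinarith
        exact le_of_mul_le_mul_left key (by linarith)
      · refine ⟨i₂, ?_⟩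
        have key : (d i₂ - d i₁) * Gfun d w lam β (d i₂)
            ≤ (d i₂ - d i₁) * Gfun d w lam β η := by nlinarith
        exact le_of_mul_le_mul_left key (by linarith)
    · -- all atoms below η; take the max atom
      obtain ⟨i₁, _, hmax⟩ := Finset.univ.exists_max_image d Finset.univ_nonempty
      have hall : ∀ i, d i < η := by
        intro i
        rcases hLH i with h | h
        · simpa [hLdef] using h
        · exact absurd ⟨i, h⟩ hH
      refine ⟨i₁, ?_⟩
      unfold Gfun
      apply Finset.sum_le_sum
      intro i _
      have h2 : d i ≤ d i₁ := hmax i (Finset.mem_univ i)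
      have h3 : d i₁ < η := hall i₁
      rw [max_eq_right (by linarith : d i - d i₁ ≤ 0),
          max_eq_left (by linarith : 0 ≤ d i₁ - d i),
          max_eq_right (by linarith : d i - η ≤ 0),
          max_eq_left (by linarith : 0 ≤ η - d i)]
      have hkey : 0 ≤ lam * w i * (1 - β) := mul_nonneg (mul_nonneg hlam (hw i)) (by linarith)
      nlinarith [mul_le_mul_of_nonneg_left (by linarith : d i₁ - d i ≤ η - d i) hkey]
  · -- all atoms above η; take the min atom
    obtain ⟨i₂, _, hmin⟩ := Finset.univ.exists_min_image d Finset.univ_nonempty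
    have hall : ∀ i, η < d i := by
      intro i
      rcases hLH i with h | h
      · exact absurd ⟨i, h⟩ hL
      · simpa [hHdef] using h
    refine ⟨i₂, ?_⟩
    unfold Gfun
    apply Finset.sum_le_sum
    intro i _
    have h2 : d i₂ ≤ d i := hmin i (Finset.mem_univ i)
    have h3 : η < d i₂ := hall i₂
    rw [max_eq_left (by linarith : 0 ≤ d i - d i₂),
        max_eq_right (by linarith : d i₂ - d i ≤ 0),
        max_eq_left (by linarith : 0 ≤ d i - η),
        max_eq_right (by linarith : η - d i ≤ 0)]
    have hkey : 0 ≤ lam * w i * β := mul_nonneg (mul_nonneg hlam (hw i)) hβ0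
    nlinarith [mul_le_mul_of_nonneg_left (by linarith : d i - d i₂ ≤ d i - η) hkey]

section bridge
variable {n : ℕ} [NeZero n] {S A : Type*} [Fintype S] [Fintype A]

lemma objF_eq_G (c : ZMod n → S → A → ℝ) (lam β : ℝ) (x : ZMod n → S → A → ℝ) (η : ℝ) :
    objF c lam β x η = (1 / (n : ℝ)) *
      Gfun (fun i : ZMod n × S × A => c i.1 i.2.1 i.2.2)
        (fun i : ZMod n × S × A => x i.1 i.2.1 i.2.2) lam β η := by
  unfold objF Gfun
  rw [Fintype.sum_prod_type]
  congr 1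
  refine Finset.sum_congr rfl fun t _ => ?_
  rw [Fintype.sum_prod_type]

lemma feasible_isCompact (p : ZMod n → S → A → S → ℝ) :
    IsCompact {x : ZMod n → S → A → ℝ | Feasible p x} := by
  have hcontEval : ∀ (t : ZMod n) (s : S) (a : A),
      Continuous fun x : ZMod n → S → A → ℝ => x t s a := fun t s a =>
    (continuous_apply a).comp ((continuous_apply s).comp (continuous_apply t))
  have hclosed : IsClosed {x : ZMod n → S → A → ℝ | Feasible p x} := by
    have h1 : IsClosed {x : ZMod n → S → A → ℝ | ∀ t s a, 0 ≤ x t s a} := by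
      have : {x : ZMod n → S → A → ℝ | ∀ t s a, 0 ≤ x t s a}
          = ⋂ t, ⋂ s, ⋂ a, {x : ZMod n → S → A → ℝ | 0 ≤ x t s a} := by
        ext x; simp [Set.mem_iInter]
      rw [this]
      exact isClosed_iInter fun t => isClosed_iInter fun s => isClosed_iInter fun a =>
        isClosed_le continuous_const (hcontEval t s a)
    have h2 : IsClosed {x : ZMod n → S → A → ℝ | ∀ t : ZMod n, ∑ s, ∑ a, x t s a = 1} := by
      have : {x : ZMod n → S → A → ℝ | ∀ t : ZMod n, ∑ s, ∑ a, x t s a = 1}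
          = ⋂ t, {x : ZMod n → S → A → ℝ | ∑ s, ∑ a, x t s a = 1} := by
        ext x; simp [Set.mem_iInter]
      rw [this]
      exact isClosed_iInter fun t => isClosed_eq
        (continuous_finset_sum _ fun s _ => continuous_finset_sum _ fun a _ => hcontEval t s a)
        continuous_const
    have h3 : IsClosed {x : ZMod n → S → A → ℝ |
        ∀ (t : ZMod n) (s : S), ∑ a, x (t + 1) s a = ∑ s', ∑ a, x t s' a * p t s' a s} := by
      have : {x : ZMod n → S → A → ℝ |
          ∀ (t : ZMod n) (s : S), ∑ a, x (t + 1) s a = ∑ s', ∑ a, x t s' a * p t s' a s}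
          = ⋂ t, ⋂ s, {x : ZMod n → S → A → ℝ |
              ∑ a, x (t + 1) s a = ∑ s', ∑ a, x t s' a * p t s' a s} := by
        ext x; simp [Set.mem_iInter]
      rw [this]
      exact isClosed_iInter fun t => isClosed_iInter fun s => isClosed_eq
        (continuous_finset_sum _ fun a _ => hcontEval (t + 1) s a)
        (continuous_finset_sum _ fun s' _ => continuous_finset_sum _ fun a _ =>
          (hcontEval t s' a).mul continuous_const)
    have : {x : ZMod n → S → A → ℝ | Feasible p x}
        = {x | ∀ t s a, 0 ≤ x t s a} ∩ ({x | ∀ t : ZMod n, ∑ s, ∑ a, x t s a = 1} ∩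
            {x | ∀ (t : ZMod n) (s : S),
              ∑ a, x (t + 1) s a = ∑ s', ∑ a, x t s' a * p t s' a s}) := by
      ext x; exact Iff.rfl
    rw [this]
    exact h1.inter (h2.inter h3)
  have hsub : {x : ZMod n → S → A → ℝ | Feasible p x} ⊆
      Set.univ.pi fun _ : ZMod n => Set.univ.pi fun _ : S => Set.univ.pi fun _ : A =>
        Set.Icc (0 : ℝ) 1 := by
    intro x hx
    obtain ⟨h0, h1, -⟩ := hx
    intro t _ s _ a _
    refine ⟨h0 t s a, ?_⟩
    calc x t s a ≤ ∑ a', x t s a' :=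
          Finset.single_le_sum (fun a' _ => h0 t s a') (Finset.mem_univ a)
      _ ≤ ∑ s', ∑ a', x t s' a' :=
          Finset.single_le_sum
            (fun s' _ => Finset.sum_nonneg fun a' _ => h0 t s' a') (Finset.mem_univ s)
      _ = 1 := h1 t
  exact IsCompact.of_isClosed_subset
    (isCompact_univ_pi fun _ => isCompact_univ_pi fun _ => isCompact_univ_pi fun _ =>
      isCompact_Icc) hclosed hsub

lemma objF_continuous (c : ZMod n → S → A → ℝ) (lam β η : ℝ) :
    Continuous fun x : ZMod n → S → A → ℝ => objF c lam β x η := by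
  have hcontEval : ∀ (t : ZMod n) (s : S) (a : A),
      Continuous fun x : ZMod n → S → A → ℝ => x t s a := fun t s a =>
    (continuous_apply a).comp ((continuous_apply s).comp (continuous_apply t))
  unfold objF
  refine continuous_const.mul ?_
  refine continuous_finset_sum _ fun t _ => continuous_finset_sum _ fun s _ =>
    continuous_finset_sum _ fun a _ => ?_
  exact (continuous_const.mul (hcontEval t s a)).add
    (((continuous_const.mul (hcontEval t s a))).mul continuous_const)

end bridge

/-- The bilinear program `min_{x ∈ X, η ∈ ℝ} f(x, η)` has an optimal solution
in which `η` equals one of the cost atoms `c(t₀, s₀, a₀)`. -/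
theorem stmt5 (n : ℕ) [NeZero n] (S A : Type*) [Fintype S] [Nonempty S]
    [Fintype A] [Nonempty A]
    (p : ZMod n → S → A → S → ℝ)
    (hp0 : ∀ t s a s', 0 ≤ p t s a s')
    (hp1 : ∀ t s a, ∑ s', p t s a s' = 1)
    (c : ZMod n → S → A → ℝ)
    (lam β : ℝ) (hlam : 0 < lam) (hβ0 : 0 < β) (hβ1 : β < 1)
    (hX : ∃ x, Feasible p x) :
    ∃ (x : ZMod n → S → A → ℝ) (t₀ : ZMod n) (s₀ : S) (a₀ : A),
      Feasible p x ∧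
      ∀ (y : ZMod n → S → A → ℝ) (η : ℝ), Feasible p y →
        objF c lam β x (c t₀ s₀ a₀) ≤ objF c lam β y η := by
  classical
  have hnpos : (0 : ℝ) < (n : ℝ) := by
    exact_mod_cast Nat.pos_of_ne_zero (NeZero.ne n)
  -- for each atom index, a minimizer of `objF · (c atom)` over the feasible set
  have hmin : ∀ i : ZMod n × S × A, ∃ x, Feasible p x ∧
      ∀ y, Feasible p y →
        objF c lam β x (c i.1 i.2.1 i.2.2) ≤ objF c lam β y (c i.1 i.2.1 i.2.2) := by
    intro i
    obtain ⟨x, hxmem, hxmin⟩ := (feasible_isCompact p).exists_isMinOn hX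
      ((objF_continuous c lam β (c i.1 i.2.1 i.2.2)).continuousOn)
    exact ⟨x, hxmem, fun y hy => hxmin hy⟩
  choose xm hxmF hxmMin using hmin
  -- pick the best atom
  obtain ⟨i₀, -, hbest⟩ := Finset.univ.exists_min_image
    (fun i : ZMod n × S × A => objF c lam β (xm i) (c i.1 i.2.1 i.2.2))
    Finset.univ_nonempty
  refine ⟨xm i₀, i₀.1, i₀.2.1, i₀.2.2, hxmF i₀, ?_⟩
  intro y η hy
  -- find an atom dominating (y, η)
  obtain ⟨j, hj⟩ := G_exists_atom (fun i : ZMod n × S × A => c i.1 i.2.1 i.2.2)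
    (fun i : ZMod n × S × A => y i.1 i.2.1 i.2.2) (fun i => hy.1 _ _ _)
    lam β hlam.le hβ0.le hβ1.le η
  have hyatom : objF c lam β y (c j.1 j.2.1 j.2.2) ≤ objF c lam β y η := by
    rw [objF_eq_G, objF_eq_G]
    exact mul_le_mul_of_nonneg_left hj (by positivity)
  calc objF c lam β (xm i₀) (c i₀.1 i₀.2.1 i₀.2.2)
      ≤ objF c lam β (xm j) (c j.1 j.2.1 j.2.2) := hbest j (Finset.mem_univ j)
    _ ≤ objF c lam β y (c j.1 j.2.1 j.2.2) := hxmMin j y hy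
    _ ≤ objF c lam β y η := hyatom
end

section
/- Let λ > 0 and β ∈ (0,1), and suppose the feasible set X is nonempty. If (x*, η*) ∈ X × ℝ is a global minimizer of f over X × ℝ (i.e., f(x*,η*) ≤ f(x,η) for all x ∈ X, η ∈ ℝ), then min_{(t,s,a)} c(t,s,a) ≤ η* ≤ max_{(t,s,a)} c(t,s,a). -/
lemma objF_lo {n : ℕ} [NeZero n] {S A : Type*} [Fintype S] [Fintype A]
    (c : ZMod n → S → A → ℝ) (lam β : ℝ) (x : ZMod n → S → A → ℝ) (η : ℝ)
    (hx1 : ∀ t : ZMod n, ∑ s, ∑ a, x t s a = 1)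
    (hlo : ∀ t s a, η ≤ c t s a) :
    objF c lam β x η =
      (1 / (n : ℝ)) * (∑ t, ∑ s, ∑ a, c t s a * x t s a) * (1 + lam * β)
        - lam * β * η := by
  have hn : (n : ℝ) ≠ 0 := Nat.cast_ne_zero.mpr (NeZero.ne n)
  have key : ∀ t s a, c t s a * x t s a +
      lam * x t s a * (β * max (c t s a - η) 0 + (1 - β) * max (η - c t s a) 0)
      = c t s a * x t s a * (1 + lam * β) - lam * β * η * x t s a := by
    intro t s a
    rw [max_eq_left (by linarith [hlo t s a]), max_eq_right (by linarith [hlo t s a])]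
    ring
  unfold objF
  simp_rw [key, Finset.sum_sub_distrib, ← Finset.sum_mul, ← Finset.mul_sum]
  simp_rw [hx1]
  simp only [mul_one, Finset.sum_const, Finset.card_univ, ZMod.card, nsmul_eq_mul]
  field_simp

lemma objF_hi {n : ℕ} [NeZero n] {S A : Type*} [Fintype S] [Fintype A]
    (c : ZMod n → S → A → ℝ) (lam β : ℝ) (x : ZMod n → S → A → ℝ) (η : ℝ)
    (hx1 : ∀ t : ZMod n, ∑ s, ∑ a, x t s a = 1)
    (hhi : ∀ t s a, c t s a ≤ η) :
    objF c lam β x η =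
      (1 / (n : ℝ)) * (∑ t, ∑ s, ∑ a, c t s a * x t s a) * (1 - lam * (1 - β))
        + lam * (1 - β) * η := by
  have hn : (n : ℝ) ≠ 0 := Nat.cast_ne_zero.mpr (NeZero.ne n)
  have key : ∀ t s a, c t s a * x t s a +
      lam * x t s a * (β * max (c t s a - η) 0 + (1 - β) * max (η - c t s a) 0)
      = c t s a * x t s a * (1 - lam * (1 - β)) + lam * (1 - β) * η * x t s a := by
    intro t s a
    rw [max_eq_right (by linarith [hhi t s a]), max_eq_left (by linarith [hhi t s a])]
    ring
  unfold objF
  simp_rw [key, Finset.sum_add_distrib, ← Finset.sum_mul, ← Finset.mul_sum]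
  simp_rw [hx1]
  simp only [mul_one, Finset.sum_const, Finset.card_univ, ZMod.card, nsmul_eq_mul]
  field_simp

/-- Any global minimizer `(x*, η*)` of `f` over `X × ℝ` has
`min c ≤ η* ≤ max c`. -/
theorem stmt6 (n : ℕ) [NeZero n] (S A : Type*) [Fintype S] [Nonempty S]
    [Fintype A] [Nonempty A]
    (p : ZMod n → S → A → S → ℝ)
    (hp0 : ∀ t s a s', 0 ≤ p t s a s')
    (hp1 : ∀ t s a, ∑ s', p t s a s' = 1)
    (c : ZMod n → S → A → ℝ)
    (lam β : ℝ) (hlam : 0 < lam) (hβ0 : 0 < β) (hβ1 : β < 1)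
    (hX : ∃ x, Feasible p x)
    (xstar : ZMod n → S → A → ℝ) (ηstar : ℝ)
    (hfeas : Feasible p xstar)
    (hmin : ∀ (x : ZMod n → S → A → ℝ) (η : ℝ), Feasible p x →
      objF c lam β xstar ηstar ≤ objF c lam β x η) :
    Finset.univ.inf' Finset.univ_nonempty
        (fun q : ZMod n × S × A => c q.1 q.2.1 q.2.2) ≤ ηstar ∧
    ηstar ≤ Finset.univ.sup' Finset.univ_nonempty
        (fun q : ZMod n × S × A => c q.1 q.2.1 q.2.2) := by
  obtain ⟨hx0, hx1, hbal⟩ := hfeas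
  set m := Finset.univ.inf' Finset.univ_nonempty
      (fun q : ZMod n × S × A => c q.1 q.2.1 q.2.2) with hm
  set M := Finset.univ.sup' Finset.univ_nonempty
      (fun q : ZMod n × S × A => c q.1 q.2.1 q.2.2) with hM
  have hmle : ∀ t s a, m ≤ c t s a := fun t s a =>
    Finset.inf'_le _ (Finset.mem_univ (t, s, a))
  have hMge : ∀ t s a, c t s a ≤ M := fun t s a => by
    rw [hM]; exact Finset.le_sup' (fun q : ZMod n × S × A => c q.1 q.2.1 q.2.2)
      (Finset.mem_univ (t, s, a))
  constructor
  · by_contra h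
    push_neg at h
    have h1 := hmin xstar m ⟨hx0, hx1, hbal⟩
    rw [objF_lo c lam β xstar ηstar hx1 (fun t s a => le_of_lt (lt_of_lt_of_le h (hmle t s a))),
        objF_lo c lam β xstar m hx1 hmle] at h1
    nlinarith [mul_pos hlam hβ0]
  · by_contra h
    push_neg at h
    have h1 := hmin xstar M ⟨hx0, hx1, hbal⟩
    rw [objF_hi c lam β xstar ηstar hx1 (fun t s a => le_of_lt (lt_of_le_of_lt (hMge t s a) h)),
        objF_hi c lam β xstar M hx1 hMge] at h1
    nlinarith [mul_pos hlam (by linarith : (0:ℝ) < 1 - β)]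
end

section
/- Let λ > 0 and β ∈ (0,1), and let x : T → S → A → ℝ satisfy x ≥ 0 and ∑_{s,a} x(t,s,a) = 1 for every t ∈ T. Then the infimum over η ∈ ℝ of f(x,η) is attained at one of the cost atoms: there exists (t₀,s₀,a₀) ∈ T × S × A such that f(x, c(t₀,s₀,a₀)) ≤ f(x,η) for all η ∈ ℝ. -/
noncomputable def Hfun {I : Type*} [Fintype I] (d w : I → ℝ) (β : ℝ) (t : ℝ) : ℝ :=
  ∑ j, w j * (β * max (d j - t) 0 + (1 - β) * max (t - d j) 0)

lemma key_step {I : Type*} [Fintype I] [Nonempty I]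
    (d w : I → ℝ) (β : ℝ) (hw : ∀ i, 0 ≤ w i) (hβ0 : 0 ≤ β) (hβ1 : β ≤ 1)
    (η : ℝ) : ∃ i : I, Hfun d w β (d i) ≤ Hfun d w β η := by
  by_cases hC1 : ∀ i, η ≤ d i
  · obtain ⟨j, -, hj⟩ := Finset.exists_min_image Finset.univ d
      ⟨Classical.arbitrary I, Finset.mem_univ _⟩
    refine ⟨j, Finset.sum_le_sum fun i _ => ?_⟩
    have h1 : η ≤ d i := hC1 i
    have h2 : d j ≤ d i := hj i (Finset.mem_univ i)
    have h3 : η ≤ d j := hC1 j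
    have e1 : max (d i - d j) 0 = d i - d j := max_eq_left (by linarith)
    have e2 : max (d j - d i) 0 = 0 := max_eq_right (by linarith)
    have e3 : max (d i - η) 0 = d i - η := max_eq_left (by linarith)
    have e4 : max (η - d i) 0 = 0 := max_eq_right (by linarith)
    rw [e1, e2, e3, e4]
    nlinarith [mul_nonneg (mul_nonneg (hw i) hβ0) (sub_nonneg.mpr h3)]
  · by_cases hC2 : ∀ i, d i ≤ η
    · obtain ⟨j, -, hj⟩ := Finset.exists_max_image Finset.univ d
        ⟨Classical.arbitrary I, Finset.mem_univ _⟩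
      refine ⟨j, Finset.sum_le_sum fun i _ => ?_⟩
      have h1 : d i ≤ η := hC2 i
      have h2 : d i ≤ d j := hj i (Finset.mem_univ i)
      have h3 : d j ≤ η := hC2 j
      have e1 : max (d j - d i) 0 = d j - d i := max_eq_left (by linarith)
      have e2 : max (d i - d j) 0 = 0 := max_eq_right (by linarith)
      have e3 : max (η - d i) 0 = η - d i := max_eq_left (by linarith)
      have e4 : max (d i - η) 0 = 0 := max_eq_right (by linarith)
      rw [e1, e2, e3, e4]
      nlinarith [mul_nonneg (mul_nonneg (hw i) (by linarith : (0:ℝ) ≤ 1 - β)) (sub_nonneg.mpr h3)]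
    · push_neg at hC1 hC2
      obtain ⟨iL, hiL⟩ := hC1
      obtain ⟨iR, hiR⟩ := hC2
      obtain ⟨ia, hiaA, ha⟩ := Finset.exists_max_image
        (Finset.univ.filter (fun i => d i ≤ η)) d
        ⟨iL, by simp [hiL.le]⟩
      obtain ⟨ib, hibB, hb⟩ := Finset.exists_min_image
        (Finset.univ.filter (fun i => η ≤ d i)) d
        ⟨iR, by simp [hiR.le]⟩
      set a := d ia with hadef
      set b := d ib with hbdef
      have haη : a ≤ η := (Finset.mem_filter.mp hiaA).2
      have hηb : η ≤ b := (Finset.mem_filter.mp hibB).2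
      have hcover : ∀ i, d i ≤ a ∨ b ≤ d i := by
        intro i
        by_cases h : d i ≤ η
        · exact Or.inl (ha i (Finset.mem_filter.mpr ⟨Finset.mem_univ i, h⟩))
        · exact Or.inr (hb i (Finset.mem_filter.mpr ⟨Finset.mem_univ i, (not_le.mp h).le⟩))
      set L : ℝ → ℝ := fun t => ∑ j, w j *
        (if d j ≤ a then (1 - β) * (t - d j) else β * (d j - t)) with hLdef
      set Q : ℝ := ∑ j, w j * (if d j ≤ a then (1 - β) else -β) with hQdef
      have hHL : ∀ t, a ≤ t → t ≤ b → Hfun d w β t = L t := by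
        intro t hat htb
        refine Finset.sum_congr rfl fun j _ => ?_
        by_cases h : d j ≤ a
        · have e1 : max (d j - t) 0 = 0 := max_eq_right (by linarith)
          have e2 : max (t - d j) 0 = t - d j := max_eq_left (by linarith)
          rw [e1, e2, if_pos h]; ring
        · have hbd : b ≤ d j := (hcover j).resolve_left h
          have e1 : max (d j - t) 0 = d j - t := max_eq_left (by linarith)
          have e2 : max (t - d j) 0 = 0 := max_eq_right (by linarith)
          rw [e1, e2, if_neg h]; ring
      have hLaff : ∀ t, L t = L η + Q * (t - η) := by
        intro t
        have : L t - L η = Q * (t - η) := by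
          rw [hLdef, hQdef]
          simp only
          rw [← Finset.sum_sub_distrib, Finset.sum_mul]
          refine Finset.sum_congr rfl fun j _ => ?_
          by_cases h : d j ≤ a <;> simp [h] <;> ring
        linarith
      rcases le_total Q 0 with hQ | hQ
      · refine ⟨ib, ?_⟩
        rw [hHL b (le_trans haη hηb) le_rfl, hHL η haη hηb, hLaff b]
        nlinarith
      · refine ⟨ia, ?_⟩
        rw [hHL a le_rfl (le_trans haη hηb), hHL η haη hηb, hLaff a]
        nlinarith

lemma key_main {I : Type*} [Fintype I] [Nonempty I]
    (d w : I → ℝ) (β : ℝ) (hw : ∀ i, 0 ≤ w i) (hβ0 : 0 ≤ β) (hβ1 : β ≤ 1) :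
    ∃ i₀ : I, ∀ η : ℝ, Hfun d w β (d i₀) ≤ Hfun d w β η := by
  obtain ⟨i₀, -, hi₀⟩ := Finset.exists_min_image Finset.univ (fun i => Hfun d w β (d i))
    ⟨Classical.arbitrary I, Finset.mem_univ _⟩
  refine ⟨i₀, fun η => ?_⟩
  obtain ⟨i, hi⟩ := key_step d w β hw hβ0 hβ1 η
  exact le_trans (hi₀ i (Finset.mem_univ i)) hi

/-- For fixed `x` in the simplex, the infimum over `η ∈ ℝ` of `f(x, η)` is
attained at one of the cost atoms `c(t₀, s₀, a₀)`. -/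
theorem stmt10 (n : ℕ) [NeZero n] (S A : Type*) [Fintype S] [Nonempty S]
    [Fintype A] [Nonempty A]
    (c : ZMod n → S → A → ℝ) (lam β : ℝ)
    (hlam : 0 < lam) (hβ0 : 0 < β) (hβ1 : β < 1)
    (x : ZMod n → S → A → ℝ)
    (hx0 : ∀ t s a, 0 ≤ x t s a)
    (hx1 : ∀ t : ZMod n, ∑ s, ∑ a, x t s a = 1) :
    ∃ (t₀ : ZMod n) (s₀ : S) (a₀ : A),
      ∀ η : ℝ, objF c lam β x (c t₀ s₀ a₀) ≤ objF c lam β x η := by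
  set d : ZMod n × S × A → ℝ := fun i => c i.1 i.2.1 i.2.2 with hd
  set w : ZMod n × S × A → ℝ := fun i => lam * x i.1 i.2.1 i.2.2 with hw
  have hwpos : ∀ i, 0 ≤ w i := fun i => mul_nonneg hlam.le (hx0 _ _ _)
  obtain ⟨i₀, hi₀⟩ := key_main d w β hwpos hβ0.le hβ1.le
  have hH : ∀ η : ℝ, Hfun d w β η = ∑ t, ∑ s, ∑ a,
      lam * x t s a * (β * max (c t s a - η) 0 + (1 - β) * max (η - c t s a) 0) := by
    intro η
    simp only [Hfun, hd, hw, Fintype.sum_prod_type]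
  have hobj : ∀ η : ℝ, objF c lam β x η =
      (1 / (n : ℝ)) * (∑ t, ∑ s, ∑ a, c t s a * x t s a) + (1 / (n : ℝ)) * Hfun d w β η := by
    intro η
    rw [objF, hH η]
    simp only [Finset.sum_add_distrib, mul_add]
  refine ⟨i₀.1, i₀.2.1, i₀.2.2, fun η => ?_⟩
  rw [hobj, hobj]
  have : Hfun d w β (d i₀) ≤ Hfun d w β η := hi₀ η
  have hn : (0:ℝ) ≤ 1 / (n : ℝ) := by positivity
  have := mul_le_mul_of_nonneg_left this hn
  have hdi : d i₀ = c i₀.1 i₀.2.1 i₀.2.2 := rfl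
  rw [hdi] at this
  linarith
end

section
/- Let λ > 0 and η ∈ ℝ, and suppose X is nonempty. Then f*(η) ≥ η, where f*(η) = inf_{x ∈ X} [ η + (λ/n)·∑_{t,s,a} x(t,s,a)·(c(t,s,a) − η)⁺ ]. Moreover, if every x ∈ X has some (t,s,a) with x(t,s,a) > 0 and c(t,s,a) > η, then f*(η) > η. -/
/-- `f*(η) = inf_{x ∈ X} [ η + (λ/n)·∑ x·(c − η)⁺ ]`. -/
noncomputable def fstar {n : ℕ} [NeZero n] {S A : Type*} [Fintype S] [Fintype A]
    (p : ZMod n → S → A → S → ℝ) (c : ZMod n → S → A → ℝ) (lam : ℝ) (η : ℝ) : ℝ :=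
  sInf {y : ℝ | ∃ x, Feasible p x ∧
    y = η + (lam / (n : ℝ)) * ∑ t, ∑ s, ∑ a, x t s a * max (c t s a - η) 0}

/-- `f*(η) ≥ η` always; and if every feasible `x` puts positive mass on some
state-action with cost exceeding `η`, then `f*(η) > η`. -/
theorem stmt12 (n : ℕ) [NeZero n] (S A : Type*) [Fintype S] [Nonempty S]
    [Fintype A] [Nonempty A]
    (p : ZMod n → S → A → S → ℝ)
    (hp0 : ∀ t s a s', 0 ≤ p t s a s')
    (hp1 : ∀ t s a, ∑ s', p t s a s' = 1)
    (c : ZMod n → S → A → ℝ)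
    (lam : ℝ) (hlam : 0 < lam) (η : ℝ)
    (hX : ∃ x, Feasible p x) :
    η ≤ fstar p c lam η ∧
    ((∀ x, Feasible p x → ∃ t s a, 0 < x t s a ∧ η < c t s a) →
      η < fstar p c lam η) := by
  classical
  set g : (ZMod n → S → A → ℝ) → ℝ :=
    fun x => ∑ t, ∑ s, ∑ a, x t s a * max (c t s a - η) 0 with hg
  have hnpos : (0 : ℝ) < (n : ℝ) := by
    exact_mod_cast Nat.pos_of_ne_zero (NeZero.ne n)
  have hln : 0 < lam / (n : ℝ) := div_pos hlam hnpos
  have hgnn : ∀ x, Feasible p x → 0 ≤ g x := by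
    intro x hx
    apply Finset.sum_nonneg; intro t _
    apply Finset.sum_nonneg; intro s _
    apply Finset.sum_nonneg; intro a _
    exact mul_nonneg (hx.1 t s a) (le_max_right _ _)
  have hset : fstar p c lam η
      = sInf {y : ℝ | ∃ x, Feasible p x ∧ y = η + (lam / (n : ℝ)) * g x} := rfl
  have hne : {y : ℝ | ∃ x, Feasible p x ∧ y = η + (lam / (n : ℝ)) * g x}.Nonempty := by
    obtain ⟨x, hx⟩ := hX; exact ⟨_, x, hx, rfl⟩
  have part1 : η ≤ fstar p c lam η := by
    rw [hset]
    apply le_csInf hne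
    rintro y ⟨x, hx, rfl⟩
    nlinarith [hgnn x hx]
  refine ⟨part1, ?_⟩
  intro hall
  -- the feasible set is compact
  have hKeq : {x : ZMod n → S → A → ℝ | Feasible p x} =
      (⋂ t, ⋂ s, ⋂ a, {x : ZMod n → S → A → ℝ | 0 ≤ x t s a}) ∩
      ((⋂ t, {x : ZMod n → S → A → ℝ | ∑ s, ∑ a, x t s a = 1}) ∩
      (⋂ t, ⋂ s, {x : ZMod n → S → A → ℝ |
        ∑ a, x (t + 1) s a = ∑ s', ∑ a, x t s' a * p t s' a s})) := by
    ext x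
    simp only [Set.mem_setOf_eq, Set.mem_inter_iff, Set.mem_iInter, Feasible]
  have hcont : ∀ (t : ZMod n) (s : S) (a : A),
      Continuous fun x : ZMod n → S → A → ℝ => x t s a := by
    intro t s a
    exact ((continuous_apply a).comp ((continuous_apply s).comp (continuous_apply t)))
  have hclosed : IsClosed {x : ZMod n → S → A → ℝ | Feasible p x} := by
    rw [hKeq]
    refine IsClosed.inter ?_ (IsClosed.inter ?_ ?_)
    · exact isClosed_iInter fun t => isClosed_iInter fun s => isClosed_iInter fun a =>
        isClosed_le continuous_const (hcont t s a)
    · exact isClosed_iInter fun t => isClosed_eq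
        (by exact continuous_finset_sum _ fun s _ => continuous_finset_sum _ fun a _ => hcont t s a)
        continuous_const
    · exact isClosed_iInter fun t => isClosed_iInter fun s => isClosed_eq
        (continuous_finset_sum _ fun a _ => hcont (t+1) s a)
        (continuous_finset_sum _ fun s' _ => continuous_finset_sum _ fun a _ =>
          (hcont t s' a).mul continuous_const)
  have hbound : ∀ x, Feasible p x → ∀ t s a, x t s a ≤ 1 := by
    intro x hx t s a
    have h1 : x t s a ≤ ∑ a, x t s a :=
      Finset.single_le_sum (fun a' _ => hx.1 t s a') (Finset.mem_univ a)
    have h2 : ∑ a, x t s a ≤ ∑ s, ∑ a, x t s a :=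
      Finset.single_le_sum (fun s' _ => Finset.sum_nonneg fun a' _ => hx.1 t s' a')
        (Finset.mem_univ s)
    calc x t s a ≤ ∑ s, ∑ a, x t s a := le_trans h1 h2
    _ = 1 := hx.2.1 t
  have hbdd : Bornology.IsBounded {x : ZMod n → S → A → ℝ | Feasible p x} := by
    apply Bornology.IsBounded.subset
      (Metric.isBounded_closedBall (x := (0 : ZMod n → S → A → ℝ)) (r := 1))
    intro x hx
    simp only [Metric.mem_closedBall, dist_zero_right]
    refine pi_norm_le_iff_of_nonneg zero_le_one |>.mpr fun t => ?_
    refine pi_norm_le_iff_of_nonneg zero_le_one |>.mpr fun s => ?_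
    refine pi_norm_le_iff_of_nonneg zero_le_one |>.mpr fun a => ?_
    rw [Real.norm_eq_abs, abs_le]
    exact ⟨by linarith [hx.1 t s a], hbound x hx t s a⟩
  have hK : IsCompact {x : ZMod n → S → A → ℝ | Feasible p x} :=
    Metric.isCompact_of_isClosed_isBounded hclosed hbdd
  have hgcont : Continuous g := by
    apply continuous_finset_sum; intro t _
    apply continuous_finset_sum; intro s _
    apply continuous_finset_sum; intro a _
    exact (hcont t s a).mul continuous_const
  obtain ⟨x, hx⟩ := hX
  obtain ⟨x₀, hx₀K, hmin⟩ := hK.exists_isMinOn ⟨x, hx⟩ hgcont.continuousOn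
  have hx₀ : Feasible p x₀ := hx₀K
  obtain ⟨t, s, a, hpos, hc⟩ := hall x₀ hx₀
  have hterm : 0 < x₀ t s a * max (c t s a - η) 0 :=
    mul_pos hpos (lt_max_iff.mpr (Or.inl (by linarith)))
  have hg0 : 0 < g x₀ := by
    have h1 : x₀ t s a * max (c t s a - η) 0 ≤ ∑ a, x₀ t s a * max (c t s a - η) 0 :=
      Finset.single_le_sum (f := fun a' => x₀ t s a' * max (c t s a' - η) 0)
        (fun a' _ => mul_nonneg (hx₀.1 t s a') (le_max_right _ _)) (Finset.mem_univ a)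
    have h2 : (∑ a, x₀ t s a * max (c t s a - η) 0)
        ≤ ∑ s, ∑ a, x₀ t s a * max (c t s a - η) 0 :=
      Finset.single_le_sum (f := fun s' => ∑ a, x₀ t s' a * max (c t s' a - η) 0)
        (fun s' _ => Finset.sum_nonneg fun a' _ =>
        mul_nonneg (hx₀.1 t s' a') (le_max_right _ _)) (Finset.mem_univ s)
    have h3 : (∑ s, ∑ a, x₀ t s a * max (c t s a - η) 0) ≤ g x₀ :=
      Finset.single_le_sum (f := fun t' => ∑ s, ∑ a, x₀ t' s a * max (c t' s a - η) 0)
        (fun t' _ => Finset.sum_nonneg fun s' _ =>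
        Finset.sum_nonneg fun a' _ => mul_nonneg (hx₀.1 t' s' a') (le_max_right _ _))
        (Finset.mem_univ t)
    linarith
  have hlb : η + (lam / (n : ℝ)) * g x₀ ≤ fstar p c lam η := by
    rw [hset]
    apply le_csInf hne
    rintro y ⟨x', hx', rfl⟩
    have h := mul_le_mul_of_nonneg_left (hmin hx') hln.le
    linarith
  nlinarith [mul_pos hln hg0]
end

section
/- Let λ > 0 and η₀ ∈ ℝ. If there exists x ∈ X with x(t,s,a) = 0 for every (t,s,a) with c(t,s,a) > η₀, then for every η ≥ η₀ one has f*(η) = η, where f*(η) = inf_{x ∈ X} [ η + (λ/n)·∑_{t,s,a} x(t,s,a)·(c(t,s,a) − η)⁺ ]. In particular f*(η) ≥ f*(η₀) for all η ≥ η₀, so any global minimizer of f* lies in (−∞, η₀]. -/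
/-- If some feasible `x` is supported on state-actions of cost at most `η₀`,
then `f*(η) = η` for all `η ≥ η₀`; in particular `f*(η) ≥ f*(η₀)` for all
`η ≥ η₀`, so any global minimizer of `f*` lies in `(−∞, η₀]`. -/
theorem stmt13 (n : ℕ) [NeZero n] (S A : Type*) [Fintype S] [Nonempty S]
    [Fintype A] [Nonempty A]
    (p : ZMod n → S → A → S → ℝ)
    (hp0 : ∀ t s a s', 0 ≤ p t s a s')
    (hp1 : ∀ t s a, ∑ s', p t s a s' = 1)
    (c : ZMod n → S → A → ℝ)
    (lam : ℝ) (hlam : 0 < lam) (η₀ : ℝ)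
    (hsupp : ∃ x, Feasible p x ∧ ∀ t s a, η₀ < c t s a → x t s a = 0) :
    (∀ η : ℝ, η₀ ≤ η → fstar p c lam η = η) ∧
    (∀ η : ℝ, η₀ ≤ η → fstar p c lam η₀ ≤ fstar p c lam η) ∧
    (∀ η' : ℝ, (∀ η'' : ℝ, fstar p c lam η' ≤ fstar p c lam η'') → η' ≤ η₀) := by
  obtain ⟨x, hx, hx0⟩ := hsupp
  have hcoef : 0 ≤ lam / (n : ℝ) :=
    div_nonneg hlam.le (Nat.cast_nonneg n)
  have key : ∀ η : ℝ, η₀ ≤ η → fstar p c lam η = η := by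
    intro η hη
    have hlb : ∀ y ∈ {y : ℝ | ∃ x, Feasible p x ∧
        y = η + (lam / (n : ℝ)) * ∑ t, ∑ s, ∑ a, x t s a * max (c t s a - η) 0},
        η ≤ y := by
      rintro y ⟨z, hz, rfl⟩
      have : 0 ≤ ∑ t, ∑ s, ∑ a, z t s a * max (c t s a - η) 0 := by
        refine Finset.sum_nonneg fun t _ => Finset.sum_nonneg fun s _ =>
          Finset.sum_nonneg fun a _ => mul_nonneg (hz.1 t s a) (le_max_right _ _)
      nlinarith [mul_nonneg hcoef this]
    have hmem : η ∈ {y : ℝ | ∃ x, Feasible p x ∧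
        y = η + (lam / (n : ℝ)) * ∑ t, ∑ s, ∑ a, x t s a * max (c t s a - η) 0} := by
      refine ⟨x, hx, ?_⟩
      have hz : ∀ t s a, x t s a * max (c t s a - η) 0 = 0 := by
        intro t s a
        rcases le_or_gt (c t s a) η₀ with h | h
        · have : max (c t s a - η) 0 = 0 := max_eq_right (by linarith)
          simp [this]
        · simp [hx0 t s a h]
      simp [hz]
    exact le_antisymm (csInf_le ⟨η, hlb⟩ hmem) (le_csInf ⟨η, hmem⟩ hlb)
  refine ⟨key, fun η hη => ?_, fun η' hmin => ?_⟩
  · rw [key η₀ le_rfl, key η hη]; exact hη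
  · by_contra h
    push_neg at h
    have h1 := hmin η₀
    rw [key η₀ le_rfl, key η' h.le] at h1
    linarith
end

section
/- Let λ > 0 and β ∈ (0,1), and suppose the feasible set X is nonempty. Then the global infimum of the bilinear program equals the minimum of the subproblem values over the finite set of cost atoms, and both are attained: inf_{x ∈ X, η ∈ ℝ} f(x,η) = min over (t₀,s₀,a₀) ∈ T × S × A of [ min_{x ∈ X} f(x, c(t₀,s₀,a₀)) ]. -/
lemma key_atom {ι : Type*} [Fintype ι] [Nonempty ι] (β : ℝ) (hβ0 : 0 ≤ β) (hβ1 : β ≤ 1)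
    (d k w : ι → ℝ) (hw : ∀ i, 0 ≤ w i) (η : ℝ) :
    ∃ i, ∑ j, (k j + w j * (β * max (d j - d i) 0 + (1 - β) * max (d i - d j) 0))
      ≤ ∑ j, (k j + w j * (β * max (d j - η) 0 + (1 - β) * max (η - d j) 0)) := by
  classical
  by_cases hmem : ∃ i, d i = η
  · obtain ⟨i, hi⟩ := hmem; exact ⟨i, by rw [hi]⟩
  by_cases hlow : ∀ i, η ≤ d i
  · obtain ⟨i, hi⟩ := Finite.exists_min d
    refine ⟨i, Finset.sum_le_sum fun j _ => ?_⟩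
    have h1 : d i ≤ d j := hi j
    have h2 : η ≤ d i := hlow i
    have h3 : η ≤ d j := hlow j
    rw [max_eq_left (by linarith : (0:ℝ) ≤ d j - d i), max_eq_right (by linarith : d i - d j ≤ 0),
        max_eq_left (by linarith : (0:ℝ) ≤ d j - η), max_eq_right (by linarith : η - d j ≤ 0)]
    nlinarith [mul_nonneg (mul_nonneg (hw j) hβ0) (by linarith : (0:ℝ) ≤ d i - η)]
  by_cases hhigh : ∀ i, d i ≤ η
  · obtain ⟨i, hi⟩ := Finite.exists_max d
    refine ⟨i, Finset.sum_le_sum fun j _ => ?_⟩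
    have h1 : d j ≤ d i := hi j
    have h2 : d i ≤ η := hhigh i
    have h3 : d j ≤ η := hhigh j
    rw [max_eq_right (by linarith : d j - d i ≤ 0), max_eq_left (by linarith : (0:ℝ) ≤ d i - d j),
        max_eq_right (by linarith : d j - η ≤ 0), max_eq_left (by linarith : (0:ℝ) ≤ η - d j)]
    nlinarith [mul_nonneg (mul_nonneg (hw j) (by linarith : (0:ℝ) ≤ 1 - β)) (by linarith : (0:ℝ) ≤ η - d i)]
  push_neg at hlow hhigh hmem
  obtain ⟨il, hil⟩ := hlow
  obtain ⟨ih, hih⟩ := hhigh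
  obtain ⟨ia, hiaM, hia⟩ := Finset.exists_max_image (Finset.univ.filter fun i => d i < η) d
    ⟨il, by simp [hil]⟩
  obtain ⟨ib, hibM, hib⟩ := Finset.exists_min_image (Finset.univ.filter fun i => η < d i) d
    ⟨ih, by simp [hih]⟩
  have ha : d ia < η := by simpa using hiaM
  have hb : η < d ib := by simpa using hibM
  have hsplit : ∀ j, d j ≤ d ia ∨ d ib ≤ d j := by
    intro j
    rcases lt_trichotomy (d j) η with h | h | h
    · exact Or.inl (hia j (by simp [h]))
    · exact absurd h (hmem j)
    · exact Or.inr (hib j (by simp [h]))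
  have hba : (0:ℝ) < d ib - d ia := by linarith
  set θ : ℝ := (d ib - η) / (d ib - d ia) with hθ
  have hθ0 : 0 ≤ θ := div_nonneg (by linarith) (by linarith)
  have hθ1 : θ ≤ 1 := by rw [hθ, div_le_one hba]; linarith
  have hηc : θ * d ia + (1 - θ) * d ib = η := by
    rw [hθ]; field_simp; ring
  have haff : ∑ j, (k j + w j * (β * max (d j - η) 0 + (1 - β) * max (η - d j) 0))
      = θ * ∑ j, (k j + w j * (β * max (d j - d ia) 0 + (1 - β) * max (d ia - d j) 0))
        + (1 - θ) * ∑ j, (k j + w j * (β * max (d j - d ib) 0 + (1 - β) * max (d ib - d j) 0)) := by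
    rw [Finset.mul_sum, Finset.mul_sum, ← Finset.sum_add_distrib]
    refine Finset.sum_congr rfl fun j _ => ?_
    rcases hsplit j with h | h
    · rw [max_eq_right (by linarith : d j - η ≤ 0), max_eq_left (by linarith : (0:ℝ) ≤ η - d j),
          max_eq_right (by linarith : d j - d ia ≤ 0), max_eq_left (by linarith : (0:ℝ) ≤ d ia - d j),
          max_eq_right (by linarith : d j - d ib ≤ 0), max_eq_left (by linarith : (0:ℝ) ≤ d ib - d j)]
      linear_combination (-(w j * (1 - β))) * hηc
    · rw [max_eq_left (by linarith : (0:ℝ) ≤ d j - η), max_eq_right (by linarith : η - d j ≤ 0),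
          max_eq_left (by linarith : (0:ℝ) ≤ d j - d ia), max_eq_right (by linarith : d ia - d j ≤ 0),
          max_eq_left (by linarith : (0:ℝ) ≤ d j - d ib), max_eq_right (by linarith : d ib - d j ≤ 0)]
      linear_combination (w j * β) * hηc
  rcases le_total
      (∑ j, (k j + w j * (β * max (d j - d ia) 0 + (1 - β) * max (d ia - d j) 0)))
      (∑ j, (k j + w j * (β * max (d j - d ib) 0 + (1 - β) * max (d ib - d j) 0))) with h | h
  · exact ⟨ia, by rw [haff]; nlinarith⟩
  · exact ⟨ib, by rw [haff]; nlinarith⟩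

lemma objF_eq {n : ℕ} [NeZero n] {S A : Type*} [Fintype S] [Fintype A]
    (c : ZMod n → S → A → ℝ) (lam β : ℝ) (x : ZMod n → S → A → ℝ) (η : ℝ) :
    objF c lam β x η = (1 / (n : ℝ)) * ∑ i : ZMod n × S × A,
      (c i.1 i.2.1 i.2.2 * x i.1 i.2.1 i.2.2 +
        lam * x i.1 i.2.1 i.2.2 *
          (β * max (c i.1 i.2.1 i.2.2 - η) 0 + (1 - β) * max (η - c i.1 i.2.1 i.2.2) 0)) := by
  rw [objF]
  rw [Fintype.sum_prod_type]
  congr 1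
  refine Finset.sum_congr rfl fun t _ => ?_
  rw [Fintype.sum_prod_type]

/-- The global infimum of the bilinear program over `X × ℝ` is attained, each
subproblem `min_{x ∈ X} f(x, c(t₀,s₀,a₀))` at a cost atom is attained, and the
global optimal value equals the minimum of the subproblem values over the
finite set of cost atoms. -/
theorem stmt14 (n : ℕ) [NeZero n] (S A : Type*) [Fintype S] [Nonempty S]
    [Fintype A] [Nonempty A]
    (p : ZMod n → S → A → S → ℝ)
    (hp0 : ∀ t s a s', 0 ≤ p t s a s')
    (hp1 : ∀ t s a, ∑ s', p t s a s' = 1)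
    (c : ZMod n → S → A → ℝ)
    (lam β : ℝ) (hlam : 0 < lam) (hβ0 : 0 < β) (hβ1 : β < 1)
    (hX : ∃ x, Feasible p x) :
    ∃ v : ℝ,
      IsLeast {y : ℝ | ∃ x η, Feasible p x ∧ y = objF c lam β x η} v ∧
      (∀ (t₀ : ZMod n) (s₀ : S) (a₀ : A),
        ∃ g : ℝ, IsLeast {y : ℝ | ∃ x, Feasible p x ∧ y = objF c lam β x (c t₀ s₀ a₀)} g) ∧
      IsLeast {g : ℝ | ∃ (t₀ : ZMod n) (s₀ : S) (a₀ : A),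
        IsLeast {y : ℝ | ∃ x, Feasible p x ∧ y = objF c lam β x (c t₀ s₀ a₀)} g} v := by
  classical
  have hev : ∀ (t : ZMod n) (s : S) (a : A),
      Continuous fun x : ZMod n → S → A → ℝ => x t s a := fun t s a =>
    (continuous_apply a).comp ((continuous_apply s).comp (continuous_apply t))
  set X : Set (ZMod n → S → A → ℝ) := {x | Feasible p x} with hXdef
  obtain ⟨x₀, hx₀⟩ := hX
  have hXne : X.Nonempty := ⟨x₀, hx₀⟩
  have hclosed : IsClosed X := by
    have hX1 : X = {x : ZMod n → S → A → ℝ | ∀ t s a, 0 ≤ x t s a} ∩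
        ({x | ∀ t : ZMod n, ∑ s, ∑ a, x t s a = 1} ∩
         {x | ∀ (t : ZMod n) (s : S), ∑ a, x (t + 1) s a = ∑ s', ∑ a, x t s' a * p t s' a s}) := by
      ext x
      simp only [hXdef, Set.mem_setOf_eq, Set.mem_inter_iff, Feasible]
    rw [hX1]
    refine IsClosed.inter ?_ (IsClosed.inter ?_ ?_)
    · simp only [Set.setOf_forall]
      exact isClosed_iInter fun t => isClosed_iInter fun s => isClosed_iInter fun a =>
        isClosed_le continuous_const (hev t s a)
    · simp only [Set.setOf_forall]
      exact isClosed_iInter fun t => isClosed_eq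
        (continuous_finset_sum _ fun s _ => continuous_finset_sum _ fun a _ => hev t s a)
        continuous_const
    · simp only [Set.setOf_forall]
      exact isClosed_iInter fun t => isClosed_iInter fun s => isClosed_eq
        (continuous_finset_sum _ fun a _ => hev (t + 1) s a)
        (continuous_finset_sum _ fun s' _ => continuous_finset_sum _ fun a _ =>
          (hev t s' a).mul continuous_const)
  have hbound : X ⊆ Metric.closedBall 0 1 := by
    intro x hx
    rw [Metric.mem_closedBall, dist_zero_right]
    rw [pi_norm_le_iff_of_nonneg (by norm_num : (0:ℝ) ≤ 1)]
    intro t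
    rw [pi_norm_le_iff_of_nonneg (by norm_num : (0:ℝ) ≤ 1)]
    intro s
    rw [pi_norm_le_iff_of_nonneg (by norm_num : (0:ℝ) ≤ 1)]
    intro a
    rw [Real.norm_eq_abs, abs_le]
    have h0 := hx.1 t s a
    have hle : x t s a ≤ 1 := by
      have h1 : x t s a ≤ ∑ a', x t s a' :=
        Finset.single_le_sum (fun a' _ => hx.1 t s a') (Finset.mem_univ a)
      have h2 : ∑ a', x t s a' ≤ ∑ s', ∑ a', x t s' a' :=
        Finset.single_le_sum (f := fun s' => ∑ a', x t s' a')
          (fun s' _ => Finset.sum_nonneg fun a' _ => hx.1 t s' a') (Finset.mem_univ s)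
      have h3 := hx.2.1 t
      linarith
    constructor <;> linarith
  have hcomp : IsCompact X :=
    (isCompact_closedBall (0 : ZMod n → S → A → ℝ) 1).of_isClosed_subset hclosed hbound
  have hcont : ∀ η : ℝ, Continuous fun x : ZMod n → S → A → ℝ => objF c lam β x η := by
    intro η
    unfold objF
    refine continuous_const.mul ?_
    refine continuous_finset_sum _ fun t _ => continuous_finset_sum _ fun s _ =>
      continuous_finset_sum _ fun a _ => ?_
    exact ((continuous_const.mul (hev t s a)).add
      ((continuous_const.mul (hev t s a)).mul continuous_const))
  have sub : ∀ η : ℝ, ∃ z, Feasible p z ∧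
      ∀ x, Feasible p x → objF c lam β z η ≤ objF c lam β x η := by
    intro η
    obtain ⟨z, hzX, hz⟩ := hcomp.exists_isMinOn hXne ((hcont η).continuousOn)
    exact ⟨z, hzX, fun x hx => hz hx⟩
  choose z hzF hzmin using sub
  have subLeast : ∀ η : ℝ,
      IsLeast {y : ℝ | ∃ x, Feasible p x ∧ y = objF c lam β x η} (objF c lam β (z η) η) :=
    fun η => ⟨⟨z η, hzF η, rfl⟩, by rintro y ⟨x, hx, rfl⟩; exact hzmin η x hx⟩
  have key : ∀ x, Feasible p x → ∀ η : ℝ, ∃ (t : ZMod n) (s : S) (a : A),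
      objF c lam β x (c t s a) ≤ objF c lam β x η := by
    intro x hx η
    obtain ⟨i, hi⟩ := key_atom β hβ0.le hβ1.le
      (fun i : ZMod n × S × A => c i.1 i.2.1 i.2.2)
      (fun i : ZMod n × S × A => c i.1 i.2.1 i.2.2 * x i.1 i.2.1 i.2.2)
      (fun i : ZMod n × S × A => lam * x i.1 i.2.1 i.2.2)
      (fun i => mul_nonneg hlam.le (hx.1 i.1 i.2.1 i.2.2)) η
    refine ⟨i.1, i.2.1, i.2.2, ?_⟩
    rw [objF_eq, objF_eq]
    refine mul_le_mul_of_nonneg_left ?_ (by positivity)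
    exact hi
  set F : ZMod n × S × A → ℝ :=
    fun i => objF c lam β (z (c i.1 i.2.1 i.2.2)) (c i.1 i.2.1 i.2.2) with hFdef
  obtain ⟨i₀, hi₀⟩ := Finite.exists_min F
  refine ⟨F i₀, ⟨⟨z (c i₀.1 i₀.2.1 i₀.2.2), c i₀.1 i₀.2.1 i₀.2.2, hzF _, rfl⟩, ?_⟩,
    fun t₀ s₀ a₀ => ⟨_, subLeast (c t₀ s₀ a₀)⟩,
    ⟨⟨i₀.1, i₀.2.1, i₀.2.2, subLeast _⟩, ?_⟩⟩
  · rintro y ⟨x, η, hx, rfl⟩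
    obtain ⟨t, s, a, hts⟩ := key x hx η
    calc F i₀ ≤ F (t, s, a) := hi₀ _
      _ ≤ objF c lam β x (c t s a) := hzmin _ x hx
      _ ≤ objF c lam β x η := hts
  · rintro g ⟨t₀, s₀, a₀, hg⟩
    have heq := hg.unique (subLeast (c t₀ s₀ a₀))
    rw [heq]
    exact hi₀ (t₀, s₀, a₀)
end
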